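/- Define P : ℂ × ℂ → ℂ by P(u,v) = 3|u| v + u² \overline{v} / |u| for u ≠ 0 and P(0,v) = 0. Then for every M > 0 and all u, v, ũ, ṽ ∈ ℂ with |u| ≤ M, |v| ≤ M, |ũ| ≤ M, |ṽ| ≤ M one has |P(u,v) − P(ũ,ṽ)| ≤ 6M |u − ũ| + 4M |v − ṽ|. -/

import Mathlib

open Complex

noncomputable section

/-- `P(u,v) = 3|u|v + u²v̄/|u|` for `u ≠ 0`, `P(0,v) = 0`. -/
def Pfun (u v : ℂ) : ℂ :=
  if u = 0 then 0
  else 3 * (‖u‖ : ℂ) * v + u ^ 2 * (starRingEnd ℂ) v / (‖u‖ : ℂ)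

open ComplexConjugate

/-!
Write `P(u,v) = 3|u| v + Q(u) v̄` with `Q(u) = (u/|u|) u`. Both `u ↦ 3|u|` and `Q` are
`3`-Lipschitz and bounded by `3|u|` resp. `|u|`, so the product rule
`|ab - cd| ≤ |a| |b - d| + |a - c| |d|` gives the constants `3 + 3 = 6` and `3 + 1 = 4`.
The only non-obvious step is that `Q` is `3`-Lipschitz although `u/|u|` is discontinuous at `0`:
`|u'| · |u/|u| - u'/|u'|| ≤ 2 |u - u'|`.
-/

lemma norm_mul_sub_mul_le {R : Type*} [SeminormedRing R] (a b c d : R) :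
    ‖a * b - c * d‖ ≤ ‖a‖ * ‖b - d‖ + ‖a - c‖ * ‖d‖ :=
  calc ‖a * b - c * d‖ = ‖a * (b - d) + (a - c) * d‖ := by congr 1; noncomm_ring
    _ ≤ ‖a‖ * ‖b - d‖ + ‖a - c‖ * ‖d‖ :=
      (norm_add_le _ _).trans (add_le_add (norm_mul_le _ _) (norm_mul_le _ _))

section NormalizedVector

variable {E : Type*} [NormedAddCommGroup E] [NormedSpace ℝ E]

lemma norm_inv_norm_smul_le_one (x : E) : ‖‖x‖⁻¹ • x‖ ≤ 1 := by
  rcases eq_or_ne x 0 with rfl | hx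
  · simp
  · exact (norm_smul_inv_norm hx).le

lemma norm_mul_norm_inv_smul_sub_le (x y : E) :
    ‖y‖ * ‖‖x‖⁻¹ • x - ‖y‖⁻¹ • y‖ ≤ 2 * ‖x - y‖ := by
  rcases eq_or_ne y 0 with rfl | hy
  · simp
  have hscale : ‖(‖y‖ / ‖x‖) • x - x‖ ≤ ‖x - y‖ := by
    rcases eq_or_ne x 0 with rfl | hx
    · simp
    have hx' : ‖x‖ ≠ 0 := norm_ne_zero_iff.2 hx
    calc ‖(‖y‖ / ‖x‖) • x - x‖ = ‖((‖y‖ - ‖x‖) / ‖x‖) • x‖ := by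
          rw [sub_div, div_self hx', sub_smul, one_smul]
      _ = |‖y‖ - ‖x‖| := by
          rw [norm_smul, norm_div, norm_norm, Real.norm_eq_abs, div_mul_cancel₀ _ hx']
      _ ≤ ‖x - y‖ := by rw [norm_sub_rev x y]; exact abs_norm_sub_norm_le y x
  calc ‖y‖ * ‖‖x‖⁻¹ • x - ‖y‖⁻¹ • y‖ = ‖(‖y‖ / ‖x‖) • x - y‖ := by
        rw [← norm_norm y, ← norm_smul, norm_norm, smul_sub, smul_smul, smul_smul,
          mul_inv_cancel₀ (norm_ne_zero_iff.2 hy), one_smul, div_eq_mul_inv]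
    _ ≤ ‖(‖y‖ / ‖x‖) • x - x‖ + ‖x - y‖ := norm_sub_le_norm_sub_add_norm_sub _ _ _
    _ ≤ 2 * ‖x - y‖ := by linarith

end NormalizedVector

lemma sq_div_norm_eq (u : ℂ) : u ^ 2 / (‖u‖ : ℂ) = (‖u‖⁻¹ • u) * u := by
  rw [Complex.real_smul, ofReal_inv]
  ring

lemma norm_sq_div_norm_sub_le (u u' : ℂ) :
    ‖u ^ 2 / (‖u‖ : ℂ) - u' ^ 2 / (‖u'‖ : ℂ)‖ ≤ 3 * ‖u - u'‖ := by
  rw [sq_div_norm_eq, sq_div_norm_eq]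
  calc _ ≤ ‖‖u‖⁻¹ • u‖ * ‖u - u'‖ + ‖‖u‖⁻¹ • u - ‖u'‖⁻¹ • u'‖ * ‖u'‖ := norm_mul_sub_mul_le ..
    _ ≤ 1 * ‖u - u'‖ + 2 * ‖u - u'‖ := by
      refine add_le_add (by gcongr; exact norm_inv_norm_smul_le_one u) ?_
      rw [mul_comm]
      exact norm_mul_norm_inv_smul_sub_le u u'
    _ = 3 * ‖u - u'‖ := by ring

lemma norm_sq_div_norm (u : ℂ) : ‖u ^ 2 / (‖u‖ : ℂ)‖ = ‖u‖ := by
  rcases eq_or_ne u 0 with rfl | hu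
  · simp
  · rw [norm_div, norm_pow, norm_real, Real.norm_eq_abs, abs_norm, sq,
      mul_div_cancel_right₀ _ (norm_ne_zero_iff.2 hu)]

lemma Pfun_eq (u v : ℂ) :
    Pfun u v = 3 * (‖u‖ : ℂ) * v + u ^ 2 / (‖u‖ : ℂ) * conj v := by
  rcases eq_or_ne u 0 with rfl | hu
  · simp [Pfun]
  · rw [Pfun, if_neg hu, mul_div_right_comm]

/-- Lipschitz-type estimate for `P` on balls of radius `M`. -/
theorem statement19 :
    ∀ M > (0 : ℝ), ∀ u v u' v' : ℂ,
      ‖u‖ ≤ M → ‖v‖ ≤ M →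
      ‖u'‖ ≤ M → ‖v'‖ ≤ M →
      ‖Pfun u v - Pfun u' v'‖
        ≤ 6 * M * ‖u - u'‖ + 4 * M * ‖v - v'‖ := by
  intro M _ u v u' v' hu _ _ hv'
  have hmod : ‖3 * (‖u‖ : ℂ) - 3 * (‖u'‖ : ℂ)‖ ≤ 3 * ‖u - u'‖ := by
    rw [← mul_sub, norm_mul, ← ofReal_sub, norm_real, Real.norm_eq_abs, RCLike.norm_ofNat]
    gcongr
    exact abs_norm_sub_norm_le u u'
  have hmod_norm : ‖3 * (‖u‖ : ℂ)‖ = 3 * ‖u‖ := by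
    rw [norm_mul, norm_real, norm_norm, RCLike.norm_ofNat]
  calc ‖Pfun u v - Pfun u' v'‖
        = ‖(3 * (‖u‖ : ℂ) * v - 3 * ‖u'‖ * v')
          + (u ^ 2 / (‖u‖ : ℂ) * conj v - u' ^ 2 / (‖u'‖ : ℂ) * conj v')‖ := by
        rw [Pfun_eq, Pfun_eq, add_sub_add_comm]
    _ ≤ (‖3 * (‖u‖ : ℂ)‖ * ‖v - v'‖ + ‖3 * (‖u‖ : ℂ) - 3 * ‖u'‖‖ * ‖v'‖)
          + (‖u ^ 2 / (‖u‖ : ℂ)‖ * ‖conj v - conj v'‖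
            + ‖u ^ 2 / (‖u‖ : ℂ) - u' ^ 2 / (‖u'‖ : ℂ)‖ * ‖conj v'‖) :=
        (norm_add_le _ _).trans (add_le_add (norm_mul_sub_mul_le ..) (norm_mul_sub_mul_le ..))
    _ ≤ (3 * ‖u‖ * ‖v - v'‖ + 3 * ‖u - u'‖ * ‖v'‖)
          + (‖u‖ * ‖v - v'‖ + 3 * ‖u - u'‖ * ‖v'‖) := by
        rw [hmod_norm, norm_sq_div_norm, ← map_sub, norm_conj, norm_conj]
        gcongr
        exact norm_sq_div_norm_sub_le u u'
    _ = 4 * ‖u‖ * ‖v - v'‖ + 6 * ‖v'‖ * ‖u - u'‖ := by ring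
    _ ≤ 4 * M * ‖v - v'‖ + 6 * M * ‖u - u'‖ := by gcongr
    _ = 6 * M * ‖u - u'‖ + 4 * M * ‖v - v'‖ := by ring
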